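/- arXiv:2109.02286 — 2 statements merged into one kernel-verified Lean document; each statement's English description precedes it below -/
import Mathlib

section
/- Let p : ℝ → ℝ² be twice continuously differentiable and let θ ∈ ℝ with p'(θ) ≠ 0. Then lim_{η→θ, η≠θ} [ p'(θ) · (p(η) − p(θ)) ] · sin(η − θ) / |p(η) − p(θ)|² = 1. (In particular, with n(θ)⊥ = p'(θ), the kernel H̃₁(θ,η) = (1/π) n(θ)⊥·(p(η)−p(θ)) sin(η−θ)/|p(θ)−p(η)|² extends continuously to the diagonal with value H̃₁(θ,θ) = 1/π.) -/
/-!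
Dividing numerator and denominator by `(η - θ)²` turns the quotient into
`⟪p'(θ), s⟫ * (sin (η - θ) / (η - θ)) / ‖s‖²` with `s` the difference quotient of `p` at `θ`.
As `η → θ`, `s → p'(θ) ≠ 0` and the middle factor tends to `1`, so the limit is `‖p'(θ)‖² / ‖p'(θ)‖² = 1`.
-/

open Filter Topology
open scoped RealInnerProductSpace

theorem tendsto_sin_div_self : Tendsto (fun t : ℝ => Real.sin t / t) (𝓝[≠] 0) (𝓝 1) := by
  refine (hasDerivAt_iff_tendsto_slope.mp (by simpa using Real.hasDerivAt_sin 0)).congr fun t => ?_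
  simp [slope_def_field]

theorem tendsto_sub_const_nhdsNE (a : ℝ) : Tendsto (fun x : ℝ => x - a) (𝓝[≠] a) (𝓝[≠] 0) := by
  refine tendsto_nhdsWithin_of_tendsto_nhds_of_eventually_within _ ?_ ?_
  · simpa using (tendsto_id.sub_const a).mono_left (nhdsWithin_le_nhds (a := a))
  · filter_upwards [self_mem_nhdsWithin] with x hx using sub_ne_zero.mpr hx

variable {E : Type*} [NormedAddCommGroup E] [InnerProductSpace ℝ E]

theorem inner_smul_mul_div_norm_smul_sq (v x : E) (s : ℝ) {c : ℝ} (hc : c ≠ 0) :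
    ⟪v, c • x⟫ * (c * s) / ‖c • x‖ ^ 2 = ⟪v, x⟫ * s / ‖x‖ ^ 2 := by
  rw [inner_smul_right, norm_smul, mul_pow, Real.norm_eq_abs, sq_abs]
  rcases eq_or_ne ‖x‖ 0 with hx | hx
  · simp [hx]
  · field_simp

theorem HasDerivAt.tendsto_inner_mul_sin_div_norm_sub_sq {p : ℝ → E} {v : E} {θ : ℝ}
    (hp : HasDerivAt p v θ) (hv : v ≠ 0) :
    Tendsto (fun η => ⟪v, p η - p θ⟫ * Real.sin (η - θ) / ‖p η - p θ‖ ^ 2) (𝓝[≠] θ) (𝓝 1) := by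
  have hslope := hasDerivAt_iff_tendsto_slope.mp hp
  have hsin := tendsto_sin_div_self.comp (tendsto_sub_const_nhdsNE θ)
  have hv2 : ‖v‖ ^ 2 ≠ 0 := by positivity
  have hlim := (((tendsto_const_nhds (x := v)).inner hslope).mul hsin).div (hslope.norm.pow 2) hv2
  rw [real_inner_self_eq_norm_sq, mul_one, div_self hv2] at hlim
  refine hlim.congr' ?_
  filter_upwards [self_mem_nhdsWithin] with η hη
  simp only [Pi.div_apply, Function.comp_apply, slope_def_module, div_eq_inv_mul (Real.sin _)]
  exact inner_smul_mul_div_norm_smul_sq v _ _ (inv_ne_zero (sub_ne_zero.mpr hη))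

theorem tangential_kernel_diagonal_limit_general
    (p : ℝ → EuclideanSpace ℝ (Fin 2))
    (θ : ℝ) (hθ : deriv p θ ≠ 0) :
    Filter.Tendsto
      (fun η => ⟪deriv p θ, p η - p θ⟫ * Real.sin (η - θ) / ‖p η - p θ‖ ^ 2)
      (nhdsWithin θ {θ}ᶜ) (nhds 1) :=
  (differentiableAt_of_deriv_ne_zero hθ).hasDerivAt.tendsto_inner_mul_sin_div_norm_sub_sq hθ

/-- For a `C²` plane curve `p` with `p'(θ) ≠ 0`,
`[p'(θ)·(p(η)−p(θ))]·sin(η−θ)/|p(η)−p(θ)|² → 1` as `η → θ`, `η ≠ θ`. -/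
theorem tangential_kernel_diagonal_limit
    (p : ℝ → EuclideanSpace ℝ (Fin 2)) (hp : ContDiff ℝ 2 p)
    (θ : ℝ) (hθ : deriv p θ ≠ 0) :
    Filter.Tendsto
      (fun η => ⟪deriv p θ, p η - p θ⟫ * Real.sin (η - θ) / ‖p η - p θ‖ ^ 2)
      (nhdsWithin θ {θ}ᶜ) (nhds 1) :=
  tangential_kernel_diagonal_limit_general p θ hθ
end

section
/- Let p = (p₁, p₂) : ℝ → ℝ² be twice continuously differentiable and let θ ∈ ℝ with p'(θ) ≠ 0. Let n(θ) = (p₂'(θ), −p₁'(θ)). Then lim_{η→θ, η≠θ} n(θ) · (p(η) − p(θ)) / |p(η) − p(θ)|² = n(θ) · p''(θ) / (2 |p'(θ)|²). -/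
open scoped RealInnerProductSpace Topology
open Filter

/-!
Both numerator and denominator vanish to second order at `θ`. Dividing each by `(η - θ)²`:
the numerator is `g(η) - g(θ)` for `g = ⟪n, p ·⟫`, whose derivative vanishes at `θ` because `n ⊥ p'(θ)`,
so by l'Hôpital it tends to `g''(θ) / 2 = ⟪n, p''(θ)⟫ / 2`; the denominator is the squared norm of the
difference quotient of `p`, which tends to `‖p'(θ)‖² ≠ 0`.
-/

theorem tendsto_sub_div_sq_of_deriv_eq_zero {g g' : ℝ → ℝ} {a c : ℝ}
    (hg : ∀ᶠ x in 𝓝 a, HasDerivAt g (g' x) x) (hg' : HasDerivAt g' c a) (h0 : g' a = 0) :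
    Tendsto (fun x => (g x - g a) / (x - a) ^ 2) (𝓝[≠] a) (𝓝 (c / 2)) := by
  have hnum : ∀ᶠ x in 𝓝[≠] a, HasDerivAt (fun x => g x - g a) (g' x) x :=
    (hg.filter_mono nhdsWithin_le_nhds).mono fun x hx => hx.sub_const (g a)
  have hden : ∀ᶠ x in 𝓝[≠] a, HasDerivAt (fun x => (x - a) ^ 2) (2 * (x - a)) x :=
    Eventually.of_forall fun x => by
      simpa using ((hasDerivAt_id x).sub_const a).fun_pow 2
  have hden_ne : ∀ᶠ x in 𝓝[≠] a, 2 * (x - a) ≠ 0 :=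
    eventually_mem_nhdsWithin.mono fun x hx => mul_ne_zero two_ne_zero (sub_ne_zero.mpr hx)
  have hnum0 : Tendsto (fun x => g x - g a) (𝓝[≠] a) (𝓝 0) := by
    simpa using (hg.self_of_nhds.continuousAt.sub_const (g a)).mono_left
      nhdsWithin_le_nhds
  have hden0 : Tendsto (fun x => (x - a) ^ 2) (𝓝[≠] a) (𝓝 0) := by
    simpa using ((continuous_sub_right a).fun_pow 2).tendsto a |>.mono_left nhdsWithin_le_nhds
  have hslope : Tendsto (fun x => slope g' a x / 2) (𝓝[≠] a) (𝓝 (c / 2)) :=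
    (hasDerivAt_iff_tendsto_slope.mp hg').div_const 2
  refine HasDerivAt.lhopital_zero_nhdsNE hnum hden hden_ne hnum0 hden0 (hslope.congr fun x => ?_)
  rw [slope_def_field, h0, sub_zero, div_div, mul_comm]

theorem tendsto_norm_sub_sq_div_sq {E : Type*} [NormedAddCommGroup E] [NormedSpace ℝ E]
    {p : ℝ → E} {v : E} {a : ℝ} (hp : HasDerivAt p v a) :
    Tendsto (fun x => ‖p x - p a‖ ^ 2 / (x - a) ^ 2) (𝓝[≠] a) (𝓝 (‖v‖ ^ 2)) := by
  refine ((hasDerivAt_iff_tendsto_slope.mp hp).norm.pow 2).congr fun x => ?_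
  rw [slope_def_module, norm_smul, mul_pow, norm_inv, Real.norm_eq_abs, inv_pow, sq_abs,
    inv_mul_eq_div]

theorem tendsto_inner_sub_div_norm_sub_sq {E : Type*} [NormedAddCommGroup E]
    [InnerProductSpace ℝ E] {p p' : ℝ → E} {a : ℝ} {n w : E}
    (hp : ∀ᶠ x in 𝓝 a, HasDerivAt p (p' x) x) (hp' : HasDerivAt p' w a)
    (horth : ⟪n, p' a⟫ = 0) (ha : p' a ≠ 0) :
    Tendsto (fun x => ⟪n, p x - p a⟫ / ‖p x - p a‖ ^ 2) (𝓝[≠] a)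
      (𝓝 (⟪n, w⟫ / (2 * ‖p' a‖ ^ 2))) := by
  have hinner {f : ℝ → E} {v : E} {x : ℝ} (hf : HasDerivAt f v x) :
      HasDerivAt (fun t => ⟪n, f t⟫) ⟪n, v⟫ x := by
    simpa using (hasDerivAt_const x n).inner ℝ hf
  have hnum : Tendsto (fun x => ⟪n, p x - p a⟫ / (x - a) ^ 2) (𝓝[≠] a) (𝓝 (⟪n, w⟫ / 2)) := by
    simpa only [inner_sub_right] using
      tendsto_sub_div_sq_of_deriv_eq_zero (hp.mono fun x => hinner) (hinner hp') horth
  have hden := tendsto_norm_sub_sq_div_sq hp.self_of_nhds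
  have hlim := hnum.div hden (pow_ne_zero 2 (norm_ne_zero_iff.mpr ha))
  rw [div_div] at hlim
  refine hlim.congr' (eventually_mem_nhdsWithin.mono fun x hx => ?_)
  exact div_div_div_cancel_right₀ (pow_ne_zero 2 (sub_ne_zero.mpr hx)) _ _

/-- For a `C²` plane curve `p` with `p'(θ) ≠ 0` and normal vector
`n(θ) = (p₂'(θ), −p₁'(θ))`,
`n(θ)·(p(η)−p(θ))/|p(η)−p(θ)|² → n(θ)·p''(θ)/(2|p'(θ)|²)` as `η → θ`, `η ≠ θ`. -/
theorem normal_kernel_diagonal_limit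
    (p : ℝ → EuclideanSpace ℝ (Fin 2)) (hp : ContDiff ℝ 2 p)
    (θ : ℝ) (hθ : deriv p θ ≠ 0)
    (n : EuclideanSpace ℝ (Fin 2))
    (hn : n = ![deriv p θ 1, -(deriv p θ 0)]) :
    Filter.Tendsto
      (fun η => ⟪n, p η - p θ⟫ / ‖p η - p θ‖ ^ 2)
      (nhdsWithin θ {θ}ᶜ)
      (nhds (⟪n, deriv (deriv p) θ⟫ / (2 * ‖deriv p θ‖ ^ 2))) := by
  have hderiv : ∀ η, HasDerivAt p (deriv p η) η :=
    fun η => (hp.differentiable two_ne_zero η).hasDerivAt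
  have horth : ⟪n, deriv p θ⟫ = 0 := by
    simp only [hn, PiLp.inner_apply, Fin.sum_univ_two, RCLike.inner_apply, conj_trivial,
      Matrix.cons_val_zero, Matrix.cons_val_one]
    ring
  exact tendsto_inner_sub_div_norm_sub_sq (Eventually.of_forall hderiv)
    (hp.differentiable_deriv_two θ).hasDerivAt horth hθ
end
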